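/- Suppose {L₁(u), L₂(v)} = [r₁₂(u,v), L₁(u)] − [r₂₁(v,u), L₂(v)] (linear r-matrix ansatz). Then {tr L(u)^k, tr L(v)^l} = 0 for all positive integers k, l. -/

import Mathlib

open scoped Kronecker

open Matrix in
/-- The entrywise bracket matrix on the tensor square. -/
def Mbr {m : ℕ} {A : Type*} [CommRing A] (P : A → A → A)
    (X Y : Matrix (Fin m) (Fin m) A) :
    Matrix (Fin m × Fin m) (Fin m × Fin m) A :=
  Matrix.of fun x y => P (X x.1 y.1) (Y x.2 y.2)

section Aux
open Matrix

variable {m : ℕ} {A : Type*} [CommRing A]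

lemma Pzero_left (P : A → A → A)
    (haddl : ∀ a b c : A, P (a + b) c = P a c + P b c) (b : A) : P 0 b = 0 := by
  have h := haddl 0 0 b
  rw [add_zero] at h
  exact (left_eq_add.mp h)

lemma Pzero_right (P : A → A → A)
    (haddr : ∀ a b c : A, P a (b + c) = P a b + P a c) (b : A) : P b 0 = 0 := by
  have h := haddr b 0 0
  rw [add_zero] at h
  exact (left_eq_add.mp h)

lemma Psum_left (P : A → A → A)
    (haddl : ∀ a b c : A, P (a + b) c = P a c + P b c)
    {ι : Type*} (s : Finset ι) (f : ι → A) (b : A) :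
    P (∑ i ∈ s, f i) b = ∑ i ∈ s, P (f i) b := by
  classical
  induction s using Finset.induction_on with
  | empty => simpa using Pzero_left P haddl b
  | insert _ _ h ih => simp [Finset.sum_insert h, haddl, ih]

lemma Psum_right (P : A → A → A)
    (haddr : ∀ a b c : A, P a (b + c) = P a b + P a c)
    {ι : Type*} (s : Finset ι) (f : ι → A) (b : A) :
    P b (∑ i ∈ s, f i) = ∑ i ∈ s, P b (f i) := by
  classical
  induction s using Finset.induction_on with
  | empty => simpa using Pzero_right P haddr b
  | insert _ _ h ih => simp [Finset.sum_insert h, haddr, ih]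

lemma Mbr_trace (P : A → A → A)
    (haddl : ∀ a b c : A, P (a + b) c = P a c + P b c)
    (haddr : ∀ a b c : A, P a (b + c) = P a b + P a c)
    (X Y : Matrix (Fin m) (Fin m) A) :
    (Mbr P X Y).trace = P X.trace Y.trace := by
  have h0 : (Mbr P X Y).trace = ∑ p : Fin m × Fin m, P (X p.1 p.1) (Y p.2 p.2) := by
    simp [Matrix.trace, Matrix.diag, Mbr]
  rw [h0, Fintype.sum_prod_type, Matrix.trace, Matrix.trace, Psum_left P haddl]
  exact Finset.sum_congr rfl fun i _ =>
    (Psum_right P haddr Finset.univ (fun j => Y j j) (X i i)).symm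

lemma sum_sum_ite_left {f : Fin m → Fin m → A} {c : Fin m} :
    (∑ x1 : Fin m, ∑ x2 : Fin m, if x1 = c then f x1 x2 else 0) =
      ∑ x2 : Fin m, f c x2 := by
  rw [Finset.sum_comm]
  simp

lemma sum_sum_ite_left' {f : Fin m → Fin m → A} {c : Fin m} :
    (∑ x1 : Fin m, ∑ x2 : Fin m, if c = x1 then f x1 x2 else 0) =
      ∑ x2 : Fin m, f c x2 := by
  rw [Finset.sum_comm]
  simp

lemma Mbr_mul_left (P : A → A → A)
    (haddl : ∀ a b c : A, P (a + b) c = P a c + P b c)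
    (hleibl : ∀ a b c : A, P (a * b) c = P a c * b + a * P b c)
    (X X' Y : Matrix (Fin m) (Fin m) A) :
    Mbr P (X * X') Y =
      Mbr P X Y * (X' ⊗ₖ (1 : Matrix (Fin m) (Fin m) A)) +
        (X ⊗ₖ (1 : Matrix (Fin m) (Fin m) A)) * Mbr P X' Y := by
  classical
  ext x y
  simp only [Mbr, Matrix.add_apply, Matrix.mul_apply, Matrix.of_apply,
    Matrix.kroneckerMap_apply, Matrix.one_apply, Fintype.sum_prod_type,
    mul_ite, mul_zero, mul_one, ite_mul, zero_mul, one_mul,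
    Finset.sum_ite_eq, Finset.sum_ite_eq', Finset.mem_univ, if_true]
  rw [Psum_left P haddl]
  rw [← Finset.sum_add_distrib]
  exact Finset.sum_congr rfl fun k _ => hleibl _ _ _

lemma Mbr_mul_right (P : A → A → A)
    (haddr : ∀ a b c : A, P a (b + c) = P a b + P a c)
    (hleibr : ∀ a b c : A, P a (b * c) = P a b * c + b * P a c)
    (X Y Y' : Matrix (Fin m) (Fin m) A) :
    Mbr P X (Y * Y') =
      Mbr P X Y * ((1 : Matrix (Fin m) (Fin m) A) ⊗ₖ Y') +
        ((1 : Matrix (Fin m) (Fin m) A) ⊗ₖ Y) * Mbr P X Y' := by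
  classical
  ext x y
  simp only [Mbr, Matrix.add_apply, Matrix.mul_apply, Matrix.of_apply,
    Matrix.kroneckerMap_apply, Matrix.one_apply, Fintype.sum_prod_type,
    mul_ite, mul_zero, mul_one, ite_mul, zero_mul, one_mul]
  rw [sum_sum_ite_left, sum_sum_ite_left']
  rw [Psum_right P haddr]
  rw [← Finset.sum_add_distrib]
  exact Finset.sum_congr rfl fun k _ => hleibr _ _ _

end Aux

/-- If `L(u)` satisfies the linear r-matrix ansatz
`{L₁(u), L₂(v)} = [r₁₂(u,v), L₁(u)] − [r₂₁(v,u), L₂(v)]` (with `r₂₁ = P r₁₂ P`,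
`r` possibly dynamical), then `{tr L(u)^k, tr L(v)^l} = 0` for all positive
integers `k, l`. -/
theorem linear_ansatz_traces_commute (m : ℕ) (A : Type*) [CommRing A]
    (P : A → A → A)
    (haddl : ∀ a b c : A, P (a + b) c = P a c + P b c)
    (haddr : ∀ a b c : A, P a (b + c) = P a b + P a c)
    (hskew : ∀ a b : A, P a b = -P b a)
    (hleib : ∀ a b c : A, P a (b * c) = P a b * c + b * P a c)
    (L : ℝ → Matrix (Fin m) (Fin m) A)
    (r : ℝ → ℝ → Matrix (Fin m × Fin m) (Fin m × Fin m) A)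
    (hlin : ∀ u v : ℝ,
      (Matrix.of fun x y : Fin m × Fin m => P (L u x.1 y.1) (L v x.2 y.2)) =
        ⁅r u v, L u ⊗ₖ (1 : Matrix (Fin m) (Fin m) A)⁆ -
          ⁅(r v u).submatrix Prod.swap Prod.swap,
            (1 : Matrix (Fin m) (Fin m) A) ⊗ₖ L v⁆) :
    ∀ (k l : ℕ), 0 < k → 0 < l → ∀ u v : ℝ,
      P ((L u ^ k).trace) ((L v ^ l).trace) = 0 := by
  intro k l hk hl u v
  -- Leibniz in the first argument
  have hleibl : ∀ a b c : A, P (a * b) c = P a c * b + a * P b c := by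
    intro a b c
    rw [hskew (a * b) c, hleib, hskew a c, hskew b c]
    ring
  set X : Matrix (Fin m) (Fin m) A := L u with hX
  set Y : Matrix (Fin m) (Fin m) A := L v with hY
  have hkmul : ∀ (a b c d : ℕ),
      ((X ^ a) ⊗ₖ (Y ^ b)) * ((X ^ c) ⊗ₖ (Y ^ d)) = (X ^ (a + c)) ⊗ₖ (Y ^ (b + d)) := by
    intro a b c d
    rw [← Matrix.mul_kronecker_mul, ← pow_add, ← pow_add]
  have hXone : X ⊗ₖ (1 : Matrix (Fin m) (Fin m) A) = (X ^ 1) ⊗ₖ (Y ^ 0) := by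
    rw [pow_one, pow_zero]
  have hYone : (1 : Matrix (Fin m) (Fin m) A) ⊗ₖ Y = (X ^ 0) ⊗ₖ (Y ^ 1) := by
    rw [pow_one, pow_zero]
  -- base case: the bracket matrix of X and Y is "good"
  have hcommX : ∀ a b : ℕ,
      (X ⊗ₖ (1 : Matrix (Fin m) (Fin m) A)) * ((X ^ a) ⊗ₖ (Y ^ b)) =
        ((X ^ a) ⊗ₖ (Y ^ b)) * (X ⊗ₖ (1 : Matrix (Fin m) (Fin m) A)) := by
    intro a b
    rw [hXone, hkmul, hkmul]
    simp [Nat.add_comm]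
  have hcommY : ∀ a b : ℕ,
      ((1 : Matrix (Fin m) (Fin m) A) ⊗ₖ Y) * ((X ^ a) ⊗ₖ (Y ^ b)) =
        ((X ^ a) ⊗ₖ (Y ^ b)) * ((1 : Matrix (Fin m) (Fin m) A) ⊗ₖ Y) := by
    intro a b
    rw [hYone, hkmul, hkmul]
    simp [Nat.add_comm]
  have g1 : ∀ a b : ℕ, (((X ^ a) ⊗ₖ (Y ^ b)) * Mbr P X Y).trace = 0 := by
    intro a b
    have hM : Mbr P X Y =
        ⁅r u v, X ⊗ₖ (1 : Matrix (Fin m) (Fin m) A)⁆ -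
          ⁅(r v u).submatrix Prod.swap Prod.swap,
            (1 : Matrix (Fin m) (Fin m) A) ⊗ₖ Y⁆ := hlin u v
    rw [hM, Ring.lie_def, Ring.lie_def]
    have h1 : (((X ^ a) ⊗ₖ (Y ^ b)) * (r u v * (X ⊗ₖ (1 : Matrix (Fin m) (Fin m) A)))).trace =
        (((X ^ a) ⊗ₖ (Y ^ b)) * ((X ⊗ₖ (1 : Matrix (Fin m) (Fin m) A)) * r u v)).trace := by
      rw [← mul_assoc, ← mul_assoc, Matrix.trace_mul_cycle, hcommX a b]
    have h2 : (((X ^ a) ⊗ₖ (Y ^ b)) * ((r v u).submatrix Prod.swap Prod.swap *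
          ((1 : Matrix (Fin m) (Fin m) A) ⊗ₖ Y))).trace =
        (((X ^ a) ⊗ₖ (Y ^ b)) * (((1 : Matrix (Fin m) (Fin m) A) ⊗ₖ Y) *
          (r v u).submatrix Prod.swap Prod.swap)).trace := by
      rw [← mul_assoc, ← mul_assoc, Matrix.trace_mul_cycle, hcommY a b]
    rw [mul_sub, Matrix.trace_sub, mul_sub, mul_sub, Matrix.trace_sub,
      Matrix.trace_sub, h1, h2]
    ring
  -- closure under right multiplication by a Kronecker power
  have g2 : ∀ (M : Matrix (Fin m × Fin m) (Fin m × Fin m) A),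
      (∀ a b : ℕ, (((X ^ a) ⊗ₖ (Y ^ b)) * M).trace = 0) →
      ∀ c d a b : ℕ,
        (((X ^ a) ⊗ₖ (Y ^ b)) * (M * ((X ^ c) ⊗ₖ (Y ^ d)))).trace = 0 := by
    intro M hM c d a b
    rw [← mul_assoc, Matrix.trace_mul_cycle, hkmul]
    exact hM _ _
  -- closure under left multiplication by a Kronecker power
  have g3 : ∀ (M : Matrix (Fin m × Fin m) (Fin m × Fin m) A),
      (∀ a b : ℕ, (((X ^ a) ⊗ₖ (Y ^ b)) * M).trace = 0) →
      ∀ c d a b : ℕ,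
        (((X ^ a) ⊗ₖ (Y ^ b)) * (((X ^ c) ⊗ₖ (Y ^ d)) * M)).trace = 0 := by
    intro M hM c d a b
    rw [← mul_assoc, hkmul]
    exact hM _ _
  -- induction in l
  have g5 : ∀ l' : ℕ, ∀ a b : ℕ,
      (((X ^ a) ⊗ₖ (Y ^ b)) * Mbr P X (Y ^ (l' + 1))).trace = 0 := by
    intro l'
    induction l' with
    | zero => simpa [pow_one] using g1
    | succ n ih =>
      intro a b
      have hp : Y ^ (n + 1 + 1) = Y * Y ^ (n + 1) := pow_succ' Y (n + 1)
      rw [hp, Mbr_mul_right P haddr hleib, mul_add, Matrix.trace_add]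
      have t1 := g2 (Mbr P X Y) g1 0 (n + 1) a b
      have t2 := g3 (Mbr P X (Y ^ (n + 1))) ih 0 1 a b
      rw [pow_zero] at t1 t2
      rw [pow_one] at t2
      rw [t1, t2, add_zero]
  -- induction in k
  have g6 : ∀ k' l' : ℕ, ∀ a b : ℕ,
      (((X ^ a) ⊗ₖ (Y ^ b)) * Mbr P (X ^ (k' + 1)) (Y ^ (l' + 1))).trace = 0 := by
    intro k'
    induction k' with
    | zero => intro l' a b; simpa [pow_one] using g5 l' a b
    | succ n ih =>
      intro l' a b
      have hp : X ^ (n + 1 + 1) = X * X ^ (n + 1) := pow_succ' X (n + 1)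
      rw [hp, Mbr_mul_left P haddl hleibl, mul_add, Matrix.trace_add]
      have t1 := g2 (Mbr P X (Y ^ (l' + 1))) (g5 l') (n + 1) 0 a b
      have t2 := g3 (Mbr P (X ^ (n + 1)) (Y ^ (l' + 1))) (ih l') 1 0 a b
      rw [pow_zero] at t1 t2
      rw [pow_one] at t2
      rw [t1, t2, add_zero]
  -- conclude
  obtain ⟨k', rfl⟩ : ∃ k', k = k' + 1 := ⟨k - 1, by omega⟩
  obtain ⟨l', rfl⟩ : ∃ l', l = l' + 1 := ⟨l - 1, by omega⟩
  have hfin := g6 k' l' 0 0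
  rw [pow_zero, pow_zero, Matrix.one_kronecker_one, one_mul] at hfin
  rw [← Mbr_trace P haddl haddr]
  exact hfin
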